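/- arXiv:2201.00754 — 4 statements merged into one kernel-verified Lean document; each statement's English description precedes it below -/
import Mathlib

section
/- Let a, b > 0 and set q* = a(a+2b)/(a+b)². Then the quantity (a² + 3ab + b²)/((a+b)(a+2b)) − √(a(a+2b))/(a+b) is positive if and only if b > (1+√2)·a, which in turn holds if and only if q* < 1/2; it is zero if and only if b = (1+√2)·a, equivalently q* = 1/2. -/
theorem concurrency_key (a b : ℝ) (ha : 0 < a) (hb : 0 < b) :
    (0 < (a ^ 2 + 3 * a * b + b ^ 2) / ((a + b) * (a + 2 * b))
        - Real.sqrt (a * (a + 2 * b)) / (a + b)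
      ↔ 0 < b ^ 2 - 2 * a * b - a ^ 2) ∧
    ((a ^ 2 + 3 * a * b + b ^ 2) / ((a + b) * (a + 2 * b))
        - Real.sqrt (a * (a + 2 * b)) / (a + b) = 0
      ↔ b ^ 2 - 2 * a * b - a ^ 2 = 0) := by
  have hab : (0:ℝ) < a + b := by linarith
  have hab2 : (0:ℝ) < a + 2 * b := by linarith
  have hN : 0 < a ^ 2 + 3 * a * b + b ^ 2 := by positivity
  have hT0 : (0:ℝ) ≤ a * (a + 2 * b) ^ 3 := by positivity
  have hsT : Real.sqrt (a * (a + 2 * b)) * (a + 2 * b) = Real.sqrt (a * (a + 2 * b) ^ 3) := by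
    have : Real.sqrt (a * (a + 2 * b) ^ 3) = Real.sqrt (a * (a + 2 * b)) * (a + 2 * b) := by
      rw [show a * (a + 2 * b) ^ 3 = (a * (a + 2 * b)) * (a + 2 * b) ^ 2 by ring,
        Real.sqrt_mul (by positivity : (0:ℝ) ≤ a * (a + 2 * b)), Real.sqrt_sq hab2.le]
    exact this.symm
  have hNT : (a ^ 2 + 3 * a * b + b ^ 2) ^ 2 - a * (a + 2 * b) ^ 3
      = b ^ 2 * (b ^ 2 - 2 * a * b - a ^ 2) := by ring
  constructor
  · rw [sub_pos, div_lt_div_iff₀ hab (by positivity),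
      show Real.sqrt (a * (a + 2 * b)) * ((a + b) * (a + 2 * b))
        = (Real.sqrt (a * (a + 2 * b)) * (a + 2 * b)) * (a + b) by ring,
      mul_lt_mul_iff_left₀ hab, hsT, Real.sqrt_lt' hN]
    constructor
    · intro h
      nlinarith [mul_pos hb hb, hNT, h]
    · intro h
      nlinarith [mul_pos hb hb, hNT, mul_pos (mul_pos hb hb) h]
  · have hexpr : (a ^ 2 + 3 * a * b + b ^ 2) / ((a + b) * (a + 2 * b))
        - Real.sqrt (a * (a + 2 * b)) / (a + b)
        = ((a ^ 2 + 3 * a * b + b ^ 2) - Real.sqrt (a * (a + 2 * b)) * (a + 2 * b))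
          / ((a + b) * (a + 2 * b)) := by
      field_simp
    rw [hexpr, div_eq_zero_iff]
    have hden : ((a + b) * (a + 2 * b)) ≠ 0 := by positivity
    constructor
    · rintro (h | h)
      · have hsN : Real.sqrt (a * (a + 2 * b) ^ 3) = a ^ 2 + 3 * a * b + b ^ 2 := by
          rw [← hsT]; linarith
        have hTN : a * (a + 2 * b) ^ 3 = (a ^ 2 + 3 * a * b + b ^ 2) ^ 2 := by
          rw [← hsN, Real.sq_sqrt hT0]
        have : b ^ 2 * (b ^ 2 - 2 * a * b - a ^ 2) = 0 := by linarith [hNT]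
        rcases mul_eq_zero.mp this with h' | h'
        · nlinarith [mul_pos hb hb]
        · exact h'
      · exact absurd h hden
    · intro h
      left
      have hNT0 : (a ^ 2 + 3 * a * b + b ^ 2) ^ 2 - a * (a + 2 * b) ^ 3 = 0 := by
        rw [hNT, h, mul_zero]
      have hTN : a * (a + 2 * b) ^ 3 = (a ^ 2 + 3 * a * b + b ^ 2) ^ 2 := by linarith
      have : Real.sqrt (a * (a + 2 * b) ^ 3) = a ^ 2 + 3 * a * b + b ^ 2 := by
        rw [hTN, Real.sqrt_sq hN.le]
      rw [hsT, this]; ring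

theorem model3_vs_model2_concurrency (a b : ℝ) (ha : 0 < a) (hb : 0 < b) :
    ((0 < (a ^ 2 + 3 * a * b + b ^ 2) / ((a + b) * (a + 2 * b))
          - Real.sqrt (a * (a + 2 * b)) / (a + b)
        ↔ b > (1 + Real.sqrt 2) * a) ∧
      (b > (1 + Real.sqrt 2) * a ↔ a * (a + 2 * b) / (a + b) ^ 2 < 1 / 2)) ∧
    (((a ^ 2 + 3 * a * b + b ^ 2) / ((a + b) * (a + 2 * b))
          - Real.sqrt (a * (a + 2 * b)) / (a + b) = 0
        ↔ b = (1 + Real.sqrt 2) * a) ∧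
      (b = (1 + Real.sqrt 2) * a ↔ a * (a + 2 * b) / (a + b) ^ 2 = 1 / 2)) := by
  obtain ⟨key1, keq1⟩ := concurrency_key a b ha hb
  have hab : (0:ℝ) < a + b := by linarith
  have hr2 : Real.sqrt 2 ^ 2 = 2 := Real.sq_sqrt (by norm_num)
  have hr1 : 1 < Real.sqrt 2 := by nlinarith [Real.sqrt_nonneg 2, hr2]
  have hfac : b ^ 2 - 2 * a * b - a ^ 2
      = (b - (1 + Real.sqrt 2) * a) * (b + (Real.sqrt 2 - 1) * a) := by
    linear_combination a ^ 2 * hr2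
  have hpos2 : 0 < b + (Real.sqrt 2 - 1) * a := by nlinarith [hr1, ha, hb]
  have key2 : b > (1 + Real.sqrt 2) * a ↔ 0 < b ^ 2 - 2 * a * b - a ^ 2 := by
    constructor
    · intro h
      rw [hfac]
      exact mul_pos (by linarith) hpos2
    · intro h
      by_contra hc
      push_neg at hc
      rw [hfac] at h
      nlinarith [mul_nonpos_of_nonpos_of_nonneg (by linarith : b - (1 + Real.sqrt 2) * a ≤ 0)
        hpos2.le]
  have key3 : a * (a + 2 * b) / (a + b) ^ 2 < 1 / 2 ↔ 0 < b ^ 2 - 2 * a * b - a ^ 2 := by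
    rw [div_lt_div_iff₀ (by positivity) (by norm_num)]
    constructor <;> intro h <;> nlinarith [h]
  have keq2 : b = (1 + Real.sqrt 2) * a ↔ b ^ 2 - 2 * a * b - a ^ 2 = 0 := by
    constructor
    · intro h
      rw [hfac, show b - (1 + Real.sqrt 2) * a = 0 by rw [h]; ring, zero_mul]
    · intro h
      rw [hfac] at h
      rcases mul_eq_zero.mp h with h' | h'
      · linarith [sub_eq_zero.mp h']
      · linarith [hpos2]
  have keq3 : a * (a + 2 * b) / (a + b) ^ 2 = 1 / 2 ↔ b ^ 2 - 2 * a * b - a ^ 2 = 0 := by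
    rw [div_eq_div_iff (by positivity) (by norm_num)]
    constructor <;> intro h <;> linear_combination -h
  exact ⟨⟨key1.trans key2.symm, key2.trans key3.symm⟩,
    ⟨keq1.trans keq2.symm, keq2.trans keq3.symm⟩⟩
end

section
/- With a, b > 0 and q* = a(a+2b)/(a+b)², the difference between the model-3 and model-1 degree variances at equal mean degree equals Var₃[k_i] − Var₁[k_i] = k̄_i(k̄_i−1)·ab³/(a+b)⁴, which is strictly positive whenever k̄_i > 1. -/
theorem var3_minus_var1_degree (a b : ℝ) (ha : 0 < a) (hb : 0 < b) (k : ℕ)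
    (q : ℝ) (hq : q = a * (a + 2 * b) / (a + b) ^ 2) :
    ((k : ℝ) * (a * (a + 2 * b)) / (a + b) ^ 2
          + (k : ℝ) * ((k : ℝ) - 1) * (a * (a ^ 2 + 3 * a * b + b ^ 2)) / (a + b) ^ 3
          - ((k : ℝ) * (a * (a + 2 * b)) / (a + b) ^ 2) ^ 2)
        - ((k : ℝ) * q * (1 - q))
      = (k : ℝ) * ((k : ℝ) - 1) * (a * b ^ 3 / (a + b) ^ 4) ∧
    (1 < k → 0 < (k : ℝ) * ((k : ℝ) - 1) * (a * b ^ 3 / (a + b) ^ 4)) := by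
  have hab : a + b ≠ 0 := by positivity
  constructor
  · subst hq; field_simp; ring
  · intro hk
    have hk' : (1 : ℝ) < (k : ℝ) := by exact_mod_cast hk
    have h1 : 0 < (k : ℝ) * ((k : ℝ) - 1) := by nlinarith
    have h2 : 0 < a * b ^ 3 / (a + b) ^ 4 := by positivity
    exact mul_pos h1 h2
end

section
/- Let a₂, b₂, a₃, b₃ > 0 satisfy a₂²/(a₂+b₂)² = a₃(a₃+2b₃)/(a₃+b₃)² (equal q*). Then Var₃[k_i] − Var₂[k_i] = k̄_i(k̄_i−1)·[a₃(a₃²+3a₃b₃+b₃²) − √(a₃³(a₃+2b₃)³)]/(a₃+b₃)³, and for k̄_i > 1 this is positive iff q* < 1/2, negative iff q* > 1/2, and zero iff q* = 1/2. -/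
theorem var3_minus_var2_degree (a2 b2 a3 b3 : ℝ) (ha2 : 0 < a2) (hb2 : 0 < b2)
    (ha3 : 0 < a3) (hb3 : 0 < b3)
    (heq : a2 ^ 2 / (a2 + b2) ^ 2 = a3 * (a3 + 2 * b3) / (a3 + b3) ^ 2)
    (k : ℕ) :
    (((k : ℝ) * (a3 * (a3 + 2 * b3)) / (a3 + b3) ^ 2
          + (k : ℝ) * ((k : ℝ) - 1) * (a3 * (a3 ^ 2 + 3 * a3 * b3 + b3 ^ 2)) / (a3 + b3) ^ 3
          - ((k : ℝ) * (a3 * (a3 + 2 * b3)) / (a3 + b3) ^ 2) ^ 2)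
        - ((k : ℝ) * (a2 / (a2 + b2)) ^ 2
            + (k : ℝ) * ((k : ℝ) - 1) * (a2 / (a2 + b2)) ^ 3
            - ((k : ℝ) * (a2 / (a2 + b2)) ^ 2) ^ 2)
      = (k : ℝ) * ((k : ℝ) - 1)
          * (a3 * (a3 ^ 2 + 3 * a3 * b3 + b3 ^ 2)
              - Real.sqrt (a3 ^ 3 * (a3 + 2 * b3) ^ 3)) / (a3 + b3) ^ 3) ∧
    (1 < k →
      ((0 < (k : ℝ) * ((k : ℝ) - 1)
            * (a3 * (a3 ^ 2 + 3 * a3 * b3 + b3 ^ 2)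
                - Real.sqrt (a3 ^ 3 * (a3 + 2 * b3) ^ 3)) / (a3 + b3) ^ 3
          ↔ a3 * (a3 + 2 * b3) / (a3 + b3) ^ 2 < 1 / 2) ∧
        ((k : ℝ) * ((k : ℝ) - 1)
            * (a3 * (a3 ^ 2 + 3 * a3 * b3 + b3 ^ 2)
                - Real.sqrt (a3 ^ 3 * (a3 + 2 * b3) ^ 3)) / (a3 + b3) ^ 3 < 0
          ↔ 1 / 2 < a3 * (a3 + 2 * b3) / (a3 + b3) ^ 2) ∧
        ((k : ℝ) * ((k : ℝ) - 1)
            * (a3 * (a3 ^ 2 + 3 * a3 * b3 + b3 ^ 2)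
                - Real.sqrt (a3 ^ 3 * (a3 + 2 * b3) ^ 3)) / (a3 + b3) ^ 3 = 0
          ↔ a3 * (a3 + 2 * b3) / (a3 + b3) ^ 2 = 1 / 2))) := by
  have hs2 : 0 < a2 + b2 := by linarith
  have hs3 : 0 < a3 + b3 := by linarith
  have hp_pos : 0 < a2 / (a2 + b2) := div_pos ha2 hs2
  have hq : (a2 / (a2 + b2)) ^ 2 = a3 * (a3 + 2 * b3) / (a3 + b3) ^ 2 := by
    rw [div_pow]; exact heq
  have harg : 0 ≤ a3 ^ 3 * (a3 + 2 * b3) ^ 3 := by positivity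
  set S := Real.sqrt (a3 ^ 3 * (a3 + 2 * b3) ^ 3) with hSdef
  have hS2 : S ^ 2 = a3 ^ 3 * (a3 + 2 * b3) ^ 3 := Real.sq_sqrt harg
  have hS0 : 0 ≤ S := Real.sqrt_nonneg _
  have hp3 : (a2 / (a2 + b2)) ^ 3 = S / (a3 + b3) ^ 3 := by
    have h1 : ((a2 / (a2 + b2)) ^ 3) ^ 2 = (S / (a3 + b3) ^ 3) ^ 2 := by
      have h2 : ((a2 / (a2 + b2)) ^ 3) ^ 2 = ((a2 / (a2 + b2)) ^ 2) ^ 3 := by ring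
      rw [h2, hq, div_pow, div_pow, hS2]; ring
    have h3 := congrArg Real.sqrt h1
    rwa [Real.sqrt_sq (by positivity), Real.sqrt_sq (by positivity)] at h3
  constructor
  · rw [hp3, hq]; ring
  · intro hk
    have hk2 : (2 : ℝ) ≤ (k : ℝ) := by exact_mod_cast hk
    have hM : 0 < (k : ℝ) * ((k : ℝ) - 1) := by nlinarith
    have hc : 0 < (k : ℝ) * ((k : ℝ) - 1) / (a3 + b3) ^ 3 := by positivity
    have hApos : 0 < a3 * (a3 ^ 2 + 3 * a3 * b3 + b3 ^ 2) := by positivity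
    have key : (a3 * (a3 ^ 2 + 3 * a3 * b3 + b3 ^ 2)) ^ 2 - S ^ 2
        = a3 ^ 2 * b3 ^ 2 * (b3 ^ 2 - 2 * a3 * b3 - a3 ^ 2) := by
      rw [hS2]; ring
    have hab : 0 < a3 ^ 2 * b3 ^ 2 := by positivity
    have hDpos : 0 < a3 * (a3 ^ 2 + 3 * a3 * b3 + b3 ^ 2) - S
        ↔ 0 < b3 ^ 2 - 2 * a3 * b3 - a3 ^ 2 := by
      rw [sub_pos]
      constructor
      · intro h
        have h2 : S ^ 2 < (a3 * (a3 ^ 2 + 3 * a3 * b3 + b3 ^ 2)) ^ 2 :=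
          (pow_lt_pow_iff_left₀ hS0 hApos.le two_ne_zero).mpr h
        have h3 : 0 < a3 ^ 2 * b3 ^ 2 * (b3 ^ 2 - 2 * a3 * b3 - a3 ^ 2) := by linarith
        exact (mul_pos_iff_of_pos_left hab).mp h3
      · intro h
        have h3 : 0 < a3 ^ 2 * b3 ^ 2 * (b3 ^ 2 - 2 * a3 * b3 - a3 ^ 2) := mul_pos hab h
        have h2 : S ^ 2 < (a3 * (a3 ^ 2 + 3 * a3 * b3 + b3 ^ 2)) ^ 2 := by linarith
        exact (pow_lt_pow_iff_left₀ hS0 hApos.le two_ne_zero).mp h2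
    have hDneg : a3 * (a3 ^ 2 + 3 * a3 * b3 + b3 ^ 2) - S < 0
        ↔ b3 ^ 2 - 2 * a3 * b3 - a3 ^ 2 < 0 := by
      rw [sub_neg]
      constructor
      · intro h
        have h2 : (a3 * (a3 ^ 2 + 3 * a3 * b3 + b3 ^ 2)) ^ 2 < S ^ 2 :=
          (pow_lt_pow_iff_left₀ hApos.le hS0 two_ne_zero).mpr h
        have h3 : a3 ^ 2 * b3 ^ 2 * (b3 ^ 2 - 2 * a3 * b3 - a3 ^ 2) < 0 := by linarith
        by_contra hcon
        push_neg at hcon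
        have := mul_nonneg hab.le hcon
        linarith
      · intro h
        have h3 : a3 ^ 2 * b3 ^ 2 * (b3 ^ 2 - 2 * a3 * b3 - a3 ^ 2) < 0 :=
          mul_neg_of_pos_of_neg hab h
        have h2 : (a3 * (a3 ^ 2 + 3 * a3 * b3 + b3 ^ 2)) ^ 2 < S ^ 2 := by linarith
        exact (pow_lt_pow_iff_left₀ hApos.le hS0 two_ne_zero).mp h2
    have hDeq : a3 * (a3 ^ 2 + 3 * a3 * b3 + b3 ^ 2) - S = 0
        ↔ b3 ^ 2 - 2 * a3 * b3 - a3 ^ 2 = 0 := by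
      rw [sub_eq_zero]
      constructor
      · intro h
        have h2 : (a3 * (a3 ^ 2 + 3 * a3 * b3 + b3 ^ 2)) ^ 2 = S ^ 2 := by rw [h]
        have h3 : a3 ^ 2 * b3 ^ 2 * (b3 ^ 2 - 2 * a3 * b3 - a3 ^ 2) = 0 := by linarith
        rcases mul_eq_zero.mp h3 with h4 | h4
        · exact absurd h4 (ne_of_gt hab)
        · exact h4
      · intro h
        have h3 : a3 ^ 2 * b3 ^ 2 * (b3 ^ 2 - 2 * a3 * b3 - a3 ^ 2) = 0 := by rw [h, mul_zero]
        have h2 : (a3 * (a3 ^ 2 + 3 * a3 * b3 + b3 ^ 2)) ^ 2 = S ^ 2 := by linarith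
        exact (pow_left_inj₀ hApos.le hS0 two_ne_zero).mp h2
    have hEpos : a3 * (a3 + 2 * b3) / (a3 + b3) ^ 2 < 1 / 2
        ↔ 0 < b3 ^ 2 - 2 * a3 * b3 - a3 ^ 2 := by
      rw [div_lt_div_iff₀ (by positivity) (by norm_num)]
      ring_nf
      constructor <;> intro h <;> linarith
    have hEneg : 1 / 2 < a3 * (a3 + 2 * b3) / (a3 + b3) ^ 2
        ↔ b3 ^ 2 - 2 * a3 * b3 - a3 ^ 2 < 0 := by
      rw [div_lt_div_iff₀ (by norm_num) (by positivity)]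
      ring_nf
      constructor <;> intro h <;> linarith
    have hEeq : a3 * (a3 + 2 * b3) / (a3 + b3) ^ 2 = 1 / 2
        ↔ b3 ^ 2 - 2 * a3 * b3 - a3 ^ 2 = 0 := by
      rw [div_eq_div_iff (by positivity) (by norm_num)]
      ring_nf
      constructor <;> intro h <;> linarith
    have hfac : (k : ℝ) * ((k : ℝ) - 1) * (a3 * (a3 ^ 2 + 3 * a3 * b3 + b3 ^ 2) - S)
          / (a3 + b3) ^ 3
        = ((k : ℝ) * ((k : ℝ) - 1) / (a3 + b3) ^ 3)
          * (a3 * (a3 ^ 2 + 3 * a3 * b3 + b3 ^ 2) - S) := by ring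
    refine ⟨?_, ?_, ?_⟩
    · rw [hfac, hEpos, ← hDpos]
      exact mul_pos_iff_of_pos_left hc
    · rw [hfac, hEneg, ← hDneg]
      constructor
      · intro h
        by_contra hcon
        push_neg at hcon
        exact absurd h (not_lt.mpr (mul_nonneg hc.le hcon))
      · exact fun h => mul_neg_of_pos_of_neg hc h
    · rw [hfac, hEeq, ← hDeq]
      constructor
      · intro h
        rcases mul_eq_zero.mp h with h1 | h1
        · exact absurd h1 (ne_of_gt hc)
        · exact h1
      · intro h; rw [h, mul_zero]
end

section
/- Let a₂, b₂, a₃, b₃ > 0 with a₂/(a₂+b₂) = √(a₃(a₃+2b₃))/(a₃+b₃) (so both models have the same q*). Then at equal q*, the difference of the average-degree variances satisfies Var₂[⟨k⟩] − Var₃[⟨k⟩] = (8/N²)·[M(M−1)/2 − S]·[√(a₃³(a₃+2b₃)³) − a₃(a₃²+3a₃b₃+b₃²)]/(a₃+b₃)³, where S is the number of unordered pairs of edges of G sharing no node; consequently, if some node of G has degree > 1, then Var₃[⟨k⟩] > Var₂[⟨k⟩] iff q* < 1/2, Var₃[⟨k⟩] < Var₂[⟨k⟩] iff q* > 1/2,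 and they are equal iff q* = 1/2. -/
set_option maxHeartbeats 3000000 in

theorem var_avg_degree_model2_vs_model3 {V : Type*} [Fintype V] [DecidableEq V]
    (G : SimpleGraph V) [DecidableRel G.Adj]
    (N M S : ℕ) (hN : N = Fintype.card V) (hM : M = G.edgeFinset.card)
    (hS : S = ((G.edgeFinset.powersetCard 2).filter
      (fun s => ∀ e ∈ s, ∀ f ∈ s, e ≠ f → ∀ v : V, ¬(v ∈ e ∧ v ∈ f))).card)
    (a2 b2 a3 b3 : ℝ) (ha2 : 0 < a2) (hb2 : 0 < b2) (ha3 : 0 < a3) (hb3 : 0 < b3)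
    (heq : a2 / (a2 + b2) = Real.sqrt (a3 * (a3 + 2 * b3)) / (a3 + b3))
    (Var2 Var3 qstar : ℝ)
    (hVar2 : Var2 = 4 * (M : ℝ) / (N : ℝ) ^ 2 * (a2 / (a2 + b2)) ^ 2
        + 4 * (M : ℝ) * ((M : ℝ) - 1) / (N : ℝ) ^ 2 * (a2 / (a2 + b2)) ^ 3
        - 8 / (N : ℝ) ^ 2 * (a2 / (a2 + b2)) ^ 3 * (b2 / (a2 + b2)) * (S : ℝ)
        - 4 * (M : ℝ) ^ 2 / (N : ℝ) ^ 2 * (a2 / (a2 + b2)) ^ 4)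
    (hVar3 : Var3 = 4 * (M : ℝ) * (a3 * (a3 + 2 * b3)) / ((N : ℝ) ^ 2 * (a3 + b3) ^ 2)
        + 4 * (M : ℝ) * ((M : ℝ) - 1) * (a3 * (a3 ^ 2 + 3 * a3 * b3 + b3 ^ 2))
            / ((N : ℝ) ^ 2 * (a3 + b3) ^ 3)
        - 8 * a3 * b3 ^ 3 * (S : ℝ) / ((N : ℝ) ^ 2 * (a3 + b3) ^ 4)
        - 4 * (M : ℝ) ^ 2 * a3 ^ 2 * (a3 + 2 * b3) ^ 2 / ((N : ℝ) ^ 2 * (a3 + b3) ^ 4))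
    (hq : qstar = a3 * (a3 + 2 * b3) / (a3 + b3) ^ 2) :
    Var2 - Var3
        = 8 / (N : ℝ) ^ 2 * ((M : ℝ) * ((M : ℝ) - 1) / 2 - (S : ℝ))
            * (Real.sqrt (a3 ^ 3 * (a3 + 2 * b3) ^ 3)
                - a3 * (a3 ^ 2 + 3 * a3 * b3 + b3 ^ 2)) / (a3 + b3) ^ 3 ∧
    ((∃ v : V, 1 < G.degree v) →
      ((Var2 < Var3 ↔ qstar < 1 / 2) ∧
        (Var3 < Var2 ↔ 1 / 2 < qstar) ∧
        (Var2 = Var3 ↔ qstar = 1 / 2))) := by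
  have hab2 : (0:ℝ) < a2 + b2 := by linarith
  have hab3 : (0:ℝ) < a3 + b3 := by linarith
  have hab3' : (a3 + b3) ≠ 0 := ne_of_gt hab3
  set sR := Real.sqrt (a3 * (a3 + 2 * b3)) with hsR_def
  have hs0 : 0 ≤ sR := Real.sqrt_nonneg _
  have hs2 : sR ^ 2 = a3 * (a3 + 2 * b3) := Real.sq_sqrt (by positivity)
  have hrhs : Real.sqrt (a3 ^ 3 * (a3 + 2 * b3) ^ 3) = sR * (a3 * (a3 + 2 * b3)) := by
    have h : a3 ^ 3 * (a3 + 2 * b3) ^ 3 = (sR * (a3 * (a3 + 2 * b3))) ^ 2 := by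
      linear_combination (-(a3 * (a3 + 2 * b3)) ^ 2) * hs2
    rw [h, Real.sqrt_sq (by positivity)]
  have hb2' : b2 / (a2 + b2) = 1 - a2 / (a2 + b2) := by field_simp; ring
  have h2 : Var2 = 4 * (M:ℝ) / (N:ℝ)^2 * (sR^2 * (1/(a3+b3))^2)
      + 4 * (M:ℝ) * ((M:ℝ) - 1) / (N:ℝ)^2 * (sR * sR^2 * (1/(a3+b3))^3)
      - 8 / (N:ℝ)^2 * (sR * sR^2 * (1/(a3+b3))^3 - sR^2 * sR^2 * (1/(a3+b3))^4) * (S:ℝ)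
      - 4 * (M:ℝ)^2 / (N:ℝ)^2 * (sR^2 * sR^2 * (1/(a3+b3))^4) := by
    rw [hVar2, hb2', heq]; ring
  rw [hs2] at h2
  have hmain : Var2 - Var3
      = 8 / (N : ℝ) ^ 2 * ((M : ℝ) * ((M : ℝ) - 1) / 2 - (S : ℝ))
            * (Real.sqrt (a3 ^ 3 * (a3 + 2 * b3) ^ 3)
                - a3 * (a3 ^ 2 + 3 * a3 * b3 + b3 ^ 2)) / (a3 + b3) ^ 3 := by
    rw [hrhs, h2, hVar3]
    rcases eq_or_ne ((N:ℝ)) 0 with hN0 | hN0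
    · rw [hN0]; norm_num
    · field_simp
      ring
  refine ⟨hmain, fun hv => ?_⟩
  obtain ⟨v, hv⟩ := hv
  have hNpos : 0 < N := by
    rw [hN]; exact Fintype.card_pos_iff.mpr ⟨v⟩
  have hNR : (0:ℝ) < (N:ℝ) := by exact_mod_cast hNpos
  have hdeg : 1 < (G.neighborFinset v).card := by
    rwa [SimpleGraph.card_neighborFinset_eq_degree]
  obtain ⟨u, hu, w, hw, huw⟩ := Finset.one_lt_card.mp hdeg
  have hadj_u : G.Adj v u := (SimpleGraph.mem_neighborFinset _ _ _).mp hu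
  have hadj_w : G.Adj v w := (SimpleGraph.mem_neighborFinset _ _ _).mp hw
  have hef : (s(v,u) : Sym2 V) ≠ s(v,w) := fun h => huw (Sym2.congr_right.mp h)
  set t : Finset (Sym2 V) := {s(v,u), s(v,w)} with ht_def
  have ht_card : t.card = 2 := by
    rw [ht_def, Finset.card_insert_of_notMem (by simp [hef]), Finset.card_singleton]
  have ht_sub : t ⊆ G.edgeFinset := by
    intro e he
    rw [ht_def] at he
    simp only [Finset.mem_insert, Finset.mem_singleton] at he
    rcases he with rfl | rfl
    · exact SimpleGraph.mem_edgeFinset.mpr hadj_u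
    · exact SimpleGraph.mem_edgeFinset.mpr hadj_w
  have ht_mem : t ∈ G.edgeFinset.powersetCard 2 :=
    Finset.mem_powersetCard.mpr ⟨ht_sub, ht_card⟩
  have ht_not : t ∉ (G.edgeFinset.powersetCard 2).filter
      (fun s => ∀ e ∈ s, ∀ f ∈ s, e ≠ f → ∀ x : V, ¬(x ∈ e ∧ x ∈ f)) := by
    intro hmem
    have hP := (Finset.mem_filter.mp hmem).2
    exact hP s(v,u) (by simp [ht_def]) s(v,w) (by simp [ht_def]) hef v
      ⟨Sym2.mem_mk_left v u, Sym2.mem_mk_left v w⟩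
  have hSlt : S < Nat.choose M 2 := by
    rw [hS, hM, ← Finset.card_powersetCard]
    exact Finset.card_lt_card
      ((Finset.ssubset_iff_of_subset (Finset.filter_subset _ _)).mpr ⟨t, ht_mem, ht_not⟩)
  have hSR : (S:ℝ) < (M:ℝ) * ((M:ℝ) - 1) / 2 := by
    have h1 : ((S:ℝ)) < (Nat.choose M 2 : ℝ) := by exact_mod_cast hSlt
    rwa [Nat.cast_choose_two] at h1
  have hXpos : 0 < (M:ℝ) * ((M:ℝ)-1)/2 - (S:ℝ) := by linarith
  set c := a3 * (a3^2 + 3*a3*b3 + b3^2) with hc_def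
  have hcpos : 0 < c := by rw [hc_def]; positivity
  set k := a3 * (a3 + 2*b3) with hk_def
  have hkpos : 0 < k := by rw [hk_def]; positivity
  have hu0 : 0 ≤ sR * k := mul_nonneg hs0 hkpos.le
  have husq : (sR*k)^2 = k^3 := by linear_combination k^2 * hs2
  have habpos : (0:ℝ) < a3^2*b3^2 := by positivity
  have hkc : k^3 - c^2 = a3^2*b3^2*(a3^2+2*a3*b3-b3^2) := by rw [hk_def, hc_def]; ring
  set T := a3^2+2*a3*b3-b3^2 with hT_def
  have hden : (0:ℝ) < 2*(a3+b3)^2 := by positivity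
  have hqt : qstar = 1/2 + T / (2*(a3+b3)^2) := by
    rw [hq, hT_def]; field_simp; ring
  have hq_lt : qstar < 1/2 ↔ T < 0 := by
    rw [hqt]
    constructor
    · intro h
      by_contra hT
      push_neg at hT
      have := div_nonneg hT hden.le
      linarith
    · intro h
      have : T / (2*(a3+b3)^2) < 0 := div_neg_of_neg_of_pos h hden
      linarith
  have hq_gt : 1/2 < qstar ↔ 0 < T := by
    rw [hqt]
    constructor
    · intro h
      by_contra hT
      push_neg at hT
      have : T / (2*(a3+b3)^2) ≤ 0 := div_nonpos_of_nonpos_of_nonneg hT hden.le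
      linarith
    · intro h
      have : 0 < T / (2*(a3+b3)^2) := div_pos h hden
      linarith
  have hq_eq : qstar = 1/2 ↔ T = 0 := by
    rw [hqt]
    constructor
    · intro h
      have h' : T / (2*(a3+b3)^2) = 0 := by linarith
      rcases div_eq_zero_iff.mp h' with h'' | h''
      · exact h''
      · exact absurd h'' hden.ne'
    · intro h
      rw [h]; simp
  have hsk_lt : sR*k < c ↔ T < 0 := by
    constructor
    · intro h
      have h2' : (sR*k)^2 < c^2 := by
        nlinarith [mul_self_lt_mul_self hu0 h]
      have h9 : a3^2*b3^2*T < 0 := by linarith [husq, hkc]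
      by_contra hT
      push_neg at hT
      have := mul_nonneg habpos.le hT
      linarith
    · intro hT
      have h8 : a3^2*b3^2*T < 0 := mul_neg_of_pos_of_neg habpos hT
      have h2' : (sR*k)^2 < c^2 := by linarith [husq, hkc]
      by_contra hcon
      push_neg at hcon
      have := pow_le_pow_left₀ hcpos.le hcon 2
      linarith
  have hsk_gt : c < sR*k ↔ 0 < T := by
    constructor
    · intro h
      have h2' : c^2 < (sR*k)^2 := by
        nlinarith [mul_self_lt_mul_self hcpos.le h]
      have h9 : 0 < a3^2*b3^2*T := by linarith [husq, hkc]
      by_contra hT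
      push_neg at hT
      have := mul_nonpos_of_nonneg_of_nonpos habpos.le hT
      linarith
    · intro hT
      have h8 : 0 < a3^2*b3^2*T := mul_pos habpos hT
      have h2' : c^2 < (sR*k)^2 := by linarith [husq, hkc]
      by_contra hcon
      push_neg at hcon
      have := pow_le_pow_left₀ hu0 hcon 2
      linarith
  have hsk_eq : sR*k = c ↔ T = 0 := by
    constructor
    · intro h
      have h' : (sR*k)^2 = c^2 := by rw [h]
      have h4 : a3^2*b3^2*T = 0 := by linarith [husq, hkc]
      rcases mul_eq_zero.mp h4 with h5 | h5
      · exact absurd h5 habpos.ne'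
      · exact h5
    · intro h
      rw [h, mul_zero] at hkc
      have hsq' : (sR*k)^2 = c^2 := by linarith
      have hz : (sR*k - c)*(sR*k + c) = 0 := by linear_combination hsq'
      rcases mul_eq_zero.mp hz with h6 | h6
      · linarith
      · linarith
  have hdiff : Var2 - Var3
      = (8/(N:ℝ)^2 * ((M:ℝ)*((M:ℝ)-1)/2 - (S:ℝ)) / (a3+b3)^3) * (sR*k - c) := by
    rw [hmain, hrhs]; ring
  set C := 8/(N:ℝ)^2 * ((M:ℝ)*((M:ℝ)-1)/2 - (S:ℝ)) / (a3+b3)^3 with hC_def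
  have hC : 0 < C := by
    rw [hC_def]
    exact div_pos (mul_pos (div_pos (by norm_num) (pow_pos hNR 2)) hXpos) (pow_pos hab3 3)
  have h_lt : Var2 < Var3 ↔ qstar < 1/2 := by
    rw [hq_lt, ← hsk_lt]
    constructor
    · intro h
      by_contra hcon
      push_neg at hcon
      have : 0 ≤ C * (sR*k - c) := mul_nonneg hC.le (by linarith)
      linarith [hdiff]
    · intro h
      have : C * (sR*k - c) < 0 := mul_neg_of_pos_of_neg hC (by linarith)
      linarith [hdiff]
  have h_gt : Var3 < Var2 ↔ 1/2 < qstar := by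
    rw [hq_gt, ← hsk_gt]
    constructor
    · intro h
      by_contra hcon
      push_neg at hcon
      have : C * (sR*k - c) ≤ 0 := mul_nonpos_of_nonneg_of_nonpos hC.le (by linarith)
      linarith [hdiff]
    · intro h
      have : 0 < C * (sR*k - c) := mul_pos hC (by linarith)
      linarith [hdiff]
  have h_eq : Var2 = Var3 ↔ qstar = 1/2 := by
    rw [hq_eq, ← hsk_eq]
    constructor
    · intro h
      have h0 : C * (sR*k - c) = 0 := by rw [← hdiff]; linarith
      rcases mul_eq_zero.mp h0 with h1 | h1
      · exact absurd h1 hC.ne'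
      · linarith
    · intro h
      have : C * (sR*k - c) = 0 := by rw [h]; ring
      linarith [hdiff]
  exact ⟨h_lt, h_gt, h_eq⟩
end
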